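/- arXiv:2408.06831 — 5 statements merged into one kernel-verified Lean document; each statement's English description precedes it below -/
import Mathlib

section
/- Let n ≥ 1 and let ω_1, …, ω_n be pairwise distinct complex numbers, none of which lies on the real segment [0,1] ⊆ ℂ. Then for every natural number m, the complex-valued integral ∫_0^1 x^m / ∏_{i=1}^n (x − ω_i) dx equals Σ_{i=1}^n g_m(ω_i) / ∏_{j≠i} (ω_i − ω_j). -/
/-!
The Lagrange identity `∑ᵢ ∏_{j ≠ i} (x - ωⱼ) / (ωᵢ - ωⱼ) = 1` is the partial fraction decomposition
`1 / ∏ᵢ (x - ωᵢ) = ∑ᵢ 1 / ((x - ωᵢ) ∏_{j ≠ i} (ωᵢ - ωⱼ))`, which reduces the integral to a single pole.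
There `x^m = ω^m + (x - ω) ∑_{i<m} x^i ω^(m-1-i)`, so
`∫₀¹ x^m / (x - ω) = ω^m ∫₀¹ 1 / (x - ω) + ∑_{i<m} ω^(m-1-i) / (i+1)`, and `Log (1 - x/ω)` is a
primitive of `1 / (x - ω)` on `[0, 1]` because `1 - x/ω` never leaves the slit plane when `ω ∉ [0, 1]`.
-/

open Complex Finset

/-- `g m ω = ω^m (Log(1 - 1/ω) + ∑_{k=1}^m 1/(k ω^k))`. -/
noncomputable def g (m : ℕ) (ω : ℂ) : ℂ :=
  ω ^ m * (Complex.log (1 - 1 / ω) + ∑ k ∈ Finset.Icc 1 m, 1 / ((k : ℂ) * ω ^ k))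

open Lagrange Polynomial in
theorem inv_prod_sub_eq_sum_nodalWeight_mul_inv_sub {F ι : Type*} [Field F] [DecidableEq ι]
    {s : Finset ι} {v : ι → F} {x : F} (hvs : Set.InjOn v s) (hs : s.Nonempty)
    (hx : ∀ i ∈ s, x ≠ v i) :
    (∏ i ∈ s, (x - v i))⁻¹ = ∑ i ∈ s, nodalWeight s v i * (x - v i)⁻¹ := by
  refine inv_eq_of_mul_eq_one_right ?_
  simpa [interpolate_one hvs hs, eval_nodal] using (eval_interpolate_not_at_node 1 hx).symm

theorem pow_mul_sum_Icc_one_div_mul_pow {F : Type*} [Field F] {ω : F} (hω : ω ≠ 0) (m : ℕ) :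
    ω ^ m * ∑ k ∈ Icc 1 m, 1 / ((k : F) * ω ^ k) =
      ∑ i ∈ range m, ω ^ (m - 1 - i) / (i + 1) := by
  rw [← Ico_add_one_right_eq_Icc, sum_Ico_eq_sum_range, add_tsub_cancel_right, mul_sum]
  refine sum_congr rfl fun i hi => ?_
  have hpow : ω ^ m = ω ^ (m - 1 - i) * ω ^ (1 + i) := by
    rw [← pow_add]
    have := mem_range.1 hi
    congr 1
    omega
  rw [hpow, Nat.cast_add, Nat.cast_one, add_comm (1 : F)]
  field_simp

theorem integral_ofReal_pow (i : ℕ) : ∫ x in (0 : ℝ)..1, (x : ℂ) ^ i = 1 / (i + 1) := by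
  simp [← ofReal_pow, intervalIntegral.integral_ofReal]

section OffUnitInterval

variable {ω : ℂ}

theorem ne_zero_of_forall_ne_ofReal_Icc (hω : ∀ x : ℝ, x ∈ Set.Icc (0 : ℝ) 1 → ω ≠ x) :
    ω ≠ 0 := by
  simpa using hω 0 (by simp)

theorem one_sub_ofReal_div_mem_slitPlane (hω : ∀ x : ℝ, x ∈ Set.Icc (0 : ℝ) 1 → ω ≠ x)
    {x : ℝ} (hx : x ∈ Set.Icc (0 : ℝ) 1) : 1 - x / ω ∈ slitPlane := by
  have hω0 := ne_zero_of_forall_ne_ofReal_Icc hω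
  rw [mem_slitPlane_iff_not_le_zero, nonpos_iff]
  rintro ⟨hre, him⟩
  set r := (1 - x / ω).re
  have hr : (x : ℂ) / ω = (1 - r : ℝ) := by
    rw [← sub_sub_cancel 1 ((x : ℂ) / ω)]
    push_cast
    exact congrArg _ (Complex.ext rfl him)
  -- so `ω = x / (1 - r)` with `1 - r ≥ 1`, a point of `[0, 1]`
  refine hω (x / (1 - r)) ⟨by apply div_nonneg <;> linarith [hx.1],
    div_le_one_of_le₀ (by linarith [hx.2]) (by linarith)⟩ ?_
  rw [div_eq_iff hω0] at hr
  rw [ofReal_div, hr, mul_div_cancel_left₀ _ (by exact_mod_cast (show 1 - r ≠ 0 by linarith))]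

theorem continuousOn_inv_ofReal_sub (hω : ∀ x : ℝ, x ∈ Set.Icc (0 : ℝ) 1 → ω ≠ x) :
    ContinuousOn (fun x : ℝ => ((x : ℂ) - ω)⁻¹) (Set.uIcc 0 1) := by
  refine (continuous_ofReal.continuousOn.sub continuousOn_const).inv₀ fun x hx => ?_
  rw [Set.uIcc_of_le zero_le_one] at hx
  exact sub_ne_zero.2 (hω x hx).symm

theorem integral_inv_ofReal_sub (hω : ∀ x : ℝ, x ∈ Set.Icc (0 : ℝ) 1 → ω ≠ x) :
    ∫ x in (0 : ℝ)..1, ((x : ℂ) - ω)⁻¹ = log (1 - 1 / ω) := by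
  have hω0 := ne_zero_of_forall_ne_ofReal_Icc hω
  have hderiv : ∀ x ∈ Set.uIcc (0 : ℝ) 1,
      HasDerivAt (fun y : ℝ => log (1 - y / ω)) ((x : ℂ) - ω)⁻¹ x := by
    intro x hx
    rw [Set.uIcc_of_le zero_le_one] at hx
    have h := (((hasDerivAt_id (x : ℂ)).div_const ω).const_sub 1).clog
      (one_sub_ofReal_div_mem_slitPlane hω hx)
    refine h.comp_ofReal.congr_deriv ?_
    have hωx : ω - x ≠ 0 := sub_ne_zero.2 (hω x hx)
    have hxω : (x : ℂ) - ω ≠ 0 := sub_ne_zero.2 (hω x hx).symm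
    rw [id, one_sub_div hω0]
    field_simp
    ring
  rw [intervalIntegral.integral_eq_sub_of_hasDerivAt hderiv
    (continuousOn_inv_ofReal_sub hω).intervalIntegrable]
  simp

theorem intervalIntegrable_pow_div_ofReal_sub
    (hω : ∀ x : ℝ, x ∈ Set.Icc (0 : ℝ) 1 → ω ≠ x) (m : ℕ) :
    IntervalIntegrable (fun x : ℝ => (x : ℂ) ^ m / ((x : ℂ) - ω)) MeasureTheory.volume 0 1 := by
  simp_rw [div_eq_mul_inv]
  exact ((continuous_ofReal.pow m).continuousOn.mul
    (continuousOn_inv_ofReal_sub hω)).intervalIntegrable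

theorem integral_pow_div_ofReal_sub (hω : ∀ x : ℝ, x ∈ Set.Icc (0 : ℝ) 1 → ω ≠ x) (m : ℕ) :
    ∫ x in (0 : ℝ)..1, (x : ℂ) ^ m / ((x : ℂ) - ω) = g m ω := by
  have hsplit : Set.EqOn (fun x : ℝ => (x : ℂ) ^ m / ((x : ℂ) - ω))
      (fun x => ω ^ m * ((x : ℂ) - ω)⁻¹ + ∑ i ∈ range m, (x : ℂ) ^ i * ω ^ (m - 1 - i))
      (Set.uIcc 0 1) := by
    intro x hx
    rw [Set.uIcc_of_le zero_le_one] at hx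
    have hxω : (x : ℂ) - ω ≠ 0 := sub_ne_zero.2 (hω x hx).symm
    field_simp
    linear_combination (geom_sum₂_mul (x : ℂ) ω m).symm
  have hpoly : ∀ i, IntervalIntegrable (fun x : ℝ => (x : ℂ) ^ i * ω ^ (m - 1 - i))
      MeasureTheory.volume 0 1 := fun i =>
    ((continuous_ofReal.pow i).mul continuous_const).intervalIntegrable 0 1
  rw [intervalIntegral.integral_congr hsplit,
    intervalIntegral.integral_add
      ((continuousOn_inv_ofReal_sub hω).intervalIntegrable.const_mul _)
      ((by fun_prop : Continuous fun x : ℝ => ∑ i ∈ range m, (x : ℂ) ^ i * ω ^ (m - 1 - i))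
        |>.intervalIntegrable 0 1),
    intervalIntegral.integral_const_mul, integral_inv_ofReal_sub hω,
    intervalIntegral.integral_finsetSum fun i _ => hpoly i, g, mul_add,
    pow_mul_sum_Icc_one_div_mul_pow (ne_zero_of_forall_ne_ofReal_Icc hω)]
  simp only [intervalIntegral.integral_mul_const, integral_ofReal_pow, one_div, inv_mul_eq_div]

end OffUnitInterval

theorem integral_rational_eq_sum_residues_simple_poles
    (n : ℕ) (hn : 1 ≤ n) (ω : Fin n → ℂ)
    (hdist : Function.Injective ω)
    (hseg : ∀ i, ∀ x : ℝ, x ∈ Set.Icc (0 : ℝ) 1 → ω i ≠ (x : ℂ)) (m : ℕ) :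
    (∫ x in (0:ℝ)..1, (x : ℂ) ^ m / ∏ i, ((x : ℂ) - ω i)) =
      ∑ i, g m (ω i) / ∏ j ∈ Finset.univ.erase i, (ω i - ω j) := by
  have hpartial : Set.EqOn (fun x : ℝ => (x : ℂ) ^ m / ∏ i, ((x : ℂ) - ω i))
      (fun x => ∑ i, Lagrange.nodalWeight univ ω i * ((x : ℂ) ^ m / ((x : ℂ) - ω i)))
      (Set.uIcc 0 1) := by
    intro x hx
    rw [Set.uIcc_of_le zero_le_one] at hx
    dsimp only
    rw [div_eq_mul_inv, inv_prod_sub_eq_sum_nodalWeight_mul_inv_sub hdist.injOn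
      (univ_nonempty_iff.2 ⟨⟨0, hn⟩⟩) fun i _ => (hseg i x hx).symm, mul_sum]
    exact sum_congr rfl fun i _ => by rw [div_eq_mul_inv, mul_left_comm]
  rw [intervalIntegral.integral_congr hpartial, intervalIntegral.integral_finsetSum
    fun i _ => (intervalIntegrable_pow_div_ofReal_sub (hseg i) m).const_mul _]
  refine sum_congr rfl fun i _ => ?_
  rw [intervalIntegral.integral_const_mul, integral_pow_div_ofReal_sub (hseg i),
    Lagrange.nodalWeight, prod_inv_distrib, div_eq_inv_mul]
end

section
/- Let n ≥ 1, let ω_1, …, ω_n be pairwise distinct complex numbers, none lying on the real segment [0,1] ⊆ ℂ, and let n_1, …, n_n be positive integers. Set h(x) = ∏_{i=1}^n (x − ω_i)^{n_i}. Then for every natural number m, ∫_0^1 x^m / h(x) dx = Σ_{i=1}^n (1/(n_i − 1)!) · D^{(n_i−1)}[ ω ↦ g_m(ω) · ∏_{j≠i} (ω − ω_j)^{−n_j} ](ω_i), where D^{(k)} denotes the k-th complex iterated derivative. -/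
/-!
For `z ∉ [0, 1]` let `J_k(z) = ∫₀¹ xᵐ (x - z)^{-(k+1)} dx`. The fundamental theorem of calculus
gives `J_0 = g_m`, and differentiation under the integral sign gives `J_k' = (k + 1) J_{k+1}`, so
`J_k(z)` is the `k`-th Taylor coefficient of `g_m` at `z`.

Let `P_i(z) = ∏_{j ≠ i} (z - ω_j)^{-N_j}` and let `S_i` be its Taylor polynomial of degree `< N_i`
at `ω_i`. Since `S_i` inverts `∏_{j ≠ i} (X - ω_j)^{N_j}` modulo `(X - ω_i)^{N_i}`, the polynomial
`∑_i S_i ∏_{j ≠ i} (X - ω_j)^{N_j} - 1` is divisible by `h` and has smaller degree, so it vanishes.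
This is the partial fraction decomposition of `1 / h` with the Taylor coefficients of the `P_i` as
numerators; integrating it against `xᵐ` produces the Taylor coefficients `J_k(ω_i)` of `g_m`, and
the Leibniz rule recombines them into the `(N_i - 1)`-th Taylor coefficient of `g_m P_i`.
-/

open Complex Finset

open Polynomial Filter Topology MeasureTheory intervalIntegral
open scoped Nat ComplexOrder

open Function in
theorem Polynomial.sum_mul_prod_erase_eq_one {ι K : Type*} [Fintype ι] [DecidableEq ι]
    [Field K] {p S : ι → K[X]} (hp : Pairwise (IsCoprime on p))
    (hS : ∀ i, (S i).degree < (p i).degree) (hprod : 0 < (∏ i, p i).degree)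
    (hdvd : ∀ i, p i ∣ S i * ∏ j ∈ univ.erase i, p j - 1) :
    ∑ i, S i * ∏ j ∈ univ.erase i, p j = 1 := by
  have hp0 : ∀ i, p i ≠ 0 := fun i h => by simpa [h] using hS i
  refine sub_eq_zero.1 (eq_zero_of_dvd_of_degree_lt (p := ∏ i, p i) ?_ ?_)
  · refine Fintype.prod_dvd_of_coprime hp fun i => ?_
    rw [← add_sum_erase _ _ (mem_univ i), add_sub_right_comm]
    refine dvd_add (hdvd i) (dvd_sum fun j hj => dvd_mul_of_dvd_right (dvd_prod_of_mem _ ?_) _)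
    exact mem_erase.2 ⟨(ne_of_mem_erase hj).symm, mem_univ i⟩
  · refine (degree_sub_le _ _).trans_lt (max_lt ((degree_sum_le _ _).trans_lt
      ((Finset.sup_lt_iff (bot_lt_of_lt hprod)).2 fun i _ => ?_)) (by rwa [degree_one]))
    rw [← mul_prod_erase _ _ (mem_univ i), degree_mul, degree_mul]
    exact WithBot.add_lt_add_right (degree_ne_bot.2 (prod_ne_zero_iff.2 fun j _ => hp0 j)) (hS i)

section TaylorCoeff

variable {𝕜 : Type*} [NontriviallyNormedField 𝕜]

noncomputable def taylorCoeff (f : 𝕜 → 𝕜) (r : 𝕜) (k : ℕ) : 𝕜 :=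
  (k ! : 𝕜)⁻¹ * iteratedDeriv k f r

noncomputable def taylorPolynomial (f : 𝕜 → 𝕜) (r : 𝕜) (N : ℕ) : 𝕜[X] :=
  ∑ k ∈ range N, C (taylorCoeff f r k) * (X - C r) ^ k

theorem Filter.EventuallyEq.taylorCoeff_eq {f h : 𝕜 → 𝕜} {r : 𝕜} (hfh : f =ᶠ[𝓝 r] h)
    (k : ℕ) : taylorCoeff f r k = taylorCoeff h r k := by
  rw [taylorCoeff, taylorCoeff, hfh.iteratedDeriv_eq]

theorem Polynomial.iteratedDeriv_eval (p : 𝕜[X]) (k : ℕ) :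
    iteratedDeriv k (fun z => p.eval z) = fun z => (derivative^[k] p).eval z := by
  induction k generalizing p with
  | zero => simp
  | succ k ih =>
    have hderiv : deriv (fun z => p.eval z) = fun z => p.derivative.eval z :=
      _root_.funext fun _ => p.deriv
    rw [iteratedDeriv_succ', hderiv, ih, Function.iterate_succ_apply]

theorem coeff_taylor_taylorPolynomial {f : 𝕜 → 𝕜} {r : 𝕜} {N k : ℕ} (hk : k < N) :
    (taylor r (taylorPolynomial f r N)).coeff k = taylorCoeff f r k := by
  simp [taylorPolynomial, hk]

theorem degree_taylorPolynomial_lt (f : 𝕜 → 𝕜) (r : 𝕜) (N : ℕ) :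
    (taylorPolynomial f r N).degree < N := by
  refine (degree_sum_le _ _).trans_lt
    ((Finset.sup_lt_iff (WithBot.bot_lt_coe N)).2 fun k hk => ?_)
  refine lt_of_le_of_lt (b := (k : WithBot ℕ)) ?_ (WithBot.coe_lt_coe.2 (mem_range.1 hk))
  compute_degree!

theorem eval_taylorPolynomial_div_pow (f : 𝕜 → 𝕜) {r x : 𝕜} (hx : x ≠ r) {N : ℕ}
    (hN : 1 ≤ N) :
    (taylorPolynomial f r N).eval x / (x - r) ^ N =
      ∑ kl ∈ antidiagonal (N - 1), taylorCoeff f r kl.2 * ((x - r) ^ (kl.1 + 1))⁻¹ := by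
  rw [← Nat.sum_antidiagonal_swap]
  simp only [Prod.fst_swap, Prod.snd_swap]
  rw [Nat.sum_antidiagonal_eq_sum_range_succ
      (fun a b => taylorCoeff f r a * ((x - r) ^ (b + 1))⁻¹),
    Nat.succ_eq_add_one, Nat.sub_add_cancel hN, taylorPolynomial, eval_finsetSum, sum_div]
  refine sum_congr rfl fun k hk => ?_
  have hsplit : (x - r) ^ N = (x - r) ^ k * (x - r) ^ (N - 1 - k + 1) := by
    rw [← pow_add]; congr 1; have := mem_range.1 hk; omega
  have hxr : x - r ≠ 0 := sub_ne_zero.2 hx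
  simp only [eval_mul, eval_C, eval_pow, eval_sub, eval_X]
  rw [hsplit]
  field_simp

variable [CharZero 𝕜]

theorem taylorCoeff_mul {f h : 𝕜 → 𝕜} {r : 𝕜} {n : ℕ} (hf : ContDiffAt 𝕜 n f r)
    (hh : ContDiffAt 𝕜 n h r) :
    taylorCoeff (fun z => f z * h z) r n =
      ∑ kl ∈ antidiagonal n, taylorCoeff f r kl.1 * taylorCoeff h r kl.2 := by
  rw [taylorCoeff, iteratedDeriv_fun_mul hf hh, Nat.sum_antidiagonal_eq_sum_range_succ
    (fun a b => taylorCoeff f r a * taylorCoeff h r b), mul_sum]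
  refine sum_congr rfl fun k hk => ?_
  rw [taylorCoeff, taylorCoeff, Nat.cast_choose 𝕜 (Nat.lt_succ_iff.1 (mem_range.1 hk))]
  have : (n ! : 𝕜) ≠ 0 := Nat.cast_ne_zero.2 n.factorial_ne_zero
  field_simp

theorem taylorCoeff_eval (p : 𝕜[X]) (r : 𝕜) (k : ℕ) :
    taylorCoeff (fun z => p.eval z) r k = (taylor r p).coeff k := by
  rw [taylorCoeff, iteratedDeriv_eval, taylor_coeff, ← factorial_smul_hasseDeriv]
  simp only [nsmul_eq_mul, Module.End.mul_apply, Module.End.natCast_apply, eval_mul,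
    eval_natCast]
  exact inv_mul_cancel_left₀ (Nat.cast_ne_zero.2 k.factorial_ne_zero) _

theorem X_sub_C_pow_dvd_taylorPolynomial_inv_mul_sub_one {q : 𝕜[X]} {r : 𝕜}
    (hq : q.eval r ≠ 0) (N : ℕ) :
    (X - C r) ^ N ∣ taylorPolynomial (fun z => (q.eval z)⁻¹) r N * q - 1 := by
  rw [X_sub_C_pow_dvd_iff, ← taylor_apply, X_pow_dvd_iff]
  intro k hk
  have hq' : ContDiff 𝕜 k fun z => q.eval z := by simpa using q.contDiff_aeval (𝕜 := 𝕜) k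
  have hone : (fun z => (q.eval z)⁻¹ * q.eval z) =ᶠ[𝓝 r] fun z => (1 : 𝕜[X]).eval z :=
    (q.continuous.continuousAt.eventually_ne hq).mono fun z hz => by simp [inv_mul_cancel₀ hz]
  calc (taylor r (taylorPolynomial (fun z => (q.eval z)⁻¹) r N * q - 1)).coeff k
      = (∑ kl ∈ antidiagonal k, taylorCoeff (fun z => (q.eval z)⁻¹) r kl.1 *
          taylorCoeff (fun z => q.eval z) r kl.2) -
          taylorCoeff (fun z => (1 : 𝕜[X]).eval z) r k := by
        rw [map_sub, taylor_mul, coeff_sub, coeff_mul, taylorCoeff_eval]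
        congr 1
        refine sum_congr rfl fun kl hkl => ?_
        rw [taylorCoeff_eval, coeff_taylor_taylorPolynomial]
        exact (mem_antidiagonal.1 hkl ▸ Nat.le_add_right _ _).trans_lt hk
    _ = 0 := by
        rw [← taylorCoeff_mul (f := fun z => (q.eval z)⁻¹) (hq'.contDiffAt.inv hq)
          hq'.contDiffAt, hone.taylorCoeff_eq, sub_self]

theorem inv_prod_sub_pow_eq_sum {ι : Type*} [Fintype ι] [DecidableEq ι] [Nonempty ι]
    {ω : ι → 𝕜} (hω : Function.Injective ω) {N : ι → ℕ} (hN : ∀ i, 1 ≤ N i) {x : 𝕜}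
    (hx : ∀ i, x ≠ ω i) :
    (∏ i, (x - ω i) ^ N i)⁻¹ = ∑ i, ∑ kl ∈ antidiagonal (N i - 1),
      taylorCoeff (fun z => ∏ j ∈ univ.erase i, ((z - ω j) ^ N j)⁻¹) (ω i) kl.2 *
        ((x - ω i) ^ (kl.1 + 1))⁻¹ := by
  set R : ι → 𝕜[X] := fun i => ∏ j ∈ univ.erase i, (X - C (ω j)) ^ N j
  set S := fun i => taylorPolynomial (fun z => ((R i).eval z)⁻¹) (ω i) (N i)
  have hR : ∀ i z, (R i).eval z = ∏ j ∈ univ.erase i, (z - ω j) ^ N j := fun i z => by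
    simp [R, eval_prod]
  have hRinv : ∀ i, (fun z => ∏ j ∈ univ.erase i, ((z - ω j) ^ N j)⁻¹) =
      fun z => ((R i).eval z)⁻¹ := fun i => funext fun z => by rw [hR, prod_inv_distrib]
  have hRω : ∀ i, (R i).eval (ω i) ≠ 0 := fun i => by
    simp [hR, prod_eq_zero_iff, sub_eq_zero, hω.eq_iff]
  have hprod : 0 < (∏ i, (X - C (ω i)) ^ N i).degree := by
    rw [← natDegree_pos_iff_degree_pos,
      natDegree_prod _ _ fun i _ => pow_ne_zero _ (X_sub_C_ne_zero _)]
    simpa using sum_pos (fun i _ => hN i) univ_nonempty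
  have hpf := sum_mul_prod_erase_eq_one (p := fun i => (X - C (ω i)) ^ N i) (S := S)
    (fun i j hij => (pairwise_coprime_X_sub_C hω hij).pow)
    (fun i => by simpa using degree_taylorPolynomial_lt _ (ω i) (N i)) hprod
    (fun i => X_sub_C_pow_dvd_taylorPolynomial_inv_mul_sub_one (hRω i) _)
  calc (∏ i, (x - ω i) ^ N i)⁻¹
      = (∑ i, (S i).eval x * ∏ j ∈ univ.erase i, (x - ω j) ^ N j) / ∏ i, (x - ω i) ^ N i := by
        have hpfx := congrArg (eval x) hpf
        simp only [eval_finsetSum, eval_mul, eval_prod, eval_pow, eval_sub, eval_X, eval_C,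
          eval_one] at hpfx
        rw [hpfx, one_div]
    _ = ∑ i, (S i).eval x / (x - ω i) ^ N i := by
        rw [sum_div]
        refine sum_congr rfl fun i _ => ?_
        rw [← mul_prod_erase _ _ (mem_univ i), mul_div_mul_right _ _
          (prod_ne_zero_iff.2 fun j _ => pow_ne_zero _ (sub_ne_zero.2 (hx j)))]
    _ = _ := sum_congr rfl fun i _ => by
        rw [hRinv, eval_taylorPolynomial_div_pow _ (hx i) (hN i)]

end TaylorCoeff

theorem contDiffAt_prod_inv_sub_pow {𝕜 ι : Type*} [NontriviallyNormedField 𝕜] {s : Finset ι}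
    {ω : ι → 𝕜} {N : ι → ℕ} {z : 𝕜} (hz : ∀ j ∈ s, z ≠ ω j) {n : WithTop ℕ∞} :
    ContDiffAt 𝕜 n (fun w => ∏ j ∈ s, ((w - ω j) ^ N j)⁻¹) z :=
  contDiffAt_prod fun j hj => ((contDiffAt_id.sub contDiffAt_const).pow _).inv
    (pow_ne_zero _ (sub_ne_zero.2 (hz j hj)))

theorem hasDerivAt_inv_sub_pow {𝕜 : Type*} [NontriviallyNormedField 𝕜] {x z : 𝕜}
    (hxz : x - z ≠ 0) (k : ℕ) :
    HasDerivAt (fun w => ((x - w) ^ (k + 1))⁻¹) ((k + 1) * ((x - z) ^ (k + 2))⁻¹) z := by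
  refine ((((hasDerivAt_id' z).const_sub x).fun_pow (k + 1)).inv
    (pow_ne_zero _ hxz)).congr_deriv ?_
  rw [Nat.add_sub_cancel]
  field_simp
  push_cast
  ring

def unitSegment : Set ℂ := ofReal '' Set.Icc 0 1

theorem isOpen_compl_unitSegment : IsOpen unitSegmentᶜ :=
  (isCompact_Icc.image continuous_ofReal).isClosed.isOpen_compl

theorem ofReal_sub_ne_zero_of_notMem_unitSegment {z : ℂ} (hz : z ∉ unitSegment) {x : ℝ}
    (hx : x ∈ Set.Icc (0 : ℝ) 1) : (x : ℂ) - z ≠ 0 :=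
  sub_ne_zero.2 fun h => hz ⟨x, hx, h⟩

theorem one_sub_div_mem_slitPlane {z : ℂ} (hz : z ∉ unitSegment) {x : ℝ}
    (hx : x ∈ Set.Icc (0 : ℝ) 1) : 1 - x / z ∈ slitPlane := by
  rw [mem_slitPlane_iff_not_le_zero, sub_nonpos]
  intro h1
  set w := ((x : ℂ) / z).re
  have hw : (x : ℂ) / z = w := eq_re_of_ofReal_le (r := 1) (by exact_mod_cast h1)
  have hw1 : 1 ≤ w := by exact_mod_cast hw ▸ h1
  have hz0 : z ≠ 0 := by
    rintro rfl
    simp only [div_zero, zero_re, w] at hw1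
    linarith
  refine hz ⟨x / w, ⟨div_nonneg hx.1 (by linarith),
    div_le_one_of_le₀ (hx.2.trans hw1) (by linarith)⟩, ?_⟩
  rw [ofReal_div, div_eq_iff (ofReal_ne_zero.2 (by linarith)), ← hw, mul_div_cancel₀ _ hz0]

noncomputable def poleIntegral (f : ℝ → ℂ) (k : ℕ) (z : ℂ) : ℂ :=
  ∫ x in (0 : ℝ)..1, f x * (((x : ℂ) - z) ^ (k + 1))⁻¹

section PoleIntegral

variable {f : ℝ → ℂ}

theorem continuousOn_poleIntegrand (hf : ContinuousOn f (Set.Icc 0 1)) {z : ℂ}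
    (hz : z ∉ unitSegment) (k : ℕ) :
    ContinuousOn (fun x : ℝ => f x * (((x : ℂ) - z) ^ (k + 1))⁻¹) (Set.Icc 0 1) :=
  hf.mul (((continuous_ofReal.sub continuous_const).pow _).continuousOn.inv₀ fun _ hx =>
    pow_ne_zero _ (ofReal_sub_ne_zero_of_notMem_unitSegment hz hx))

theorem intervalIntegrable_poleIntegrand (hf : ContinuousOn f (Set.Icc 0 1)) {z : ℂ}
    (hz : z ∉ unitSegment) (k : ℕ) :
    IntervalIntegrable (fun x : ℝ => f x * (((x : ℂ) - z) ^ (k + 1))⁻¹) volume 0 1 :=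
  (continuousOn_poleIntegrand hf hz k).intervalIntegrable_of_Icc zero_le_one

theorem integral_sum_mul_poleIntegrand {ι : Type*} (hf : ContinuousOn f (Set.Icc 0 1))
    {s : Finset ι} {z : ι → ℂ} (hz : ∀ a ∈ s, z a ∉ unitSegment) {c : ι → ℂ} {k : ι → ℕ} :
    ∫ x in (0 : ℝ)..1, ∑ a ∈ s, c a * (f x * (((x : ℂ) - z a) ^ (k a + 1))⁻¹) =
      ∑ a ∈ s, c a * poleIntegral f (k a) (z a) := by
  rw [integral_finsetSum fun a ha =>
    (intervalIntegrable_poleIntegrand hf (hz a ha) (k a)).const_mul (c a)]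
  exact sum_congr rfl fun a _ => integral_const_mul _ _

theorem hasDerivAt_poleIntegral (hf : ContinuousOn f (Set.Icc 0 1)) {z : ℂ}
    (hz : z ∉ unitSegment) (k : ℕ) :
    HasDerivAt (poleIntegral f k) ((k + 1) * poleIntegral f (k + 1) z) z := by
  obtain ⟨ε, hε, hball⟩ :=
    Metric.nhds_basis_closedBall.mem_iff.1 (isOpen_compl_unitSegment.mem_nhds hz)
  have hIoc : Set.uIoc (0 : ℝ) 1 ⊆ Set.Icc 0 1 := by
    rw [Set.uIoc_of_le zero_le_one]
    exact Set.Ioc_subset_Icc_self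
  obtain ⟨C, hC⟩ := (isCompact_Icc.prod (isCompact_closedBall z ε)).exists_bound_of_continuousOn
    (f := fun p : ℝ × ℂ => ((k : ℂ) + 1) * (f p.1 * (((p.1 : ℂ) - p.2) ^ (k + 2))⁻¹)) <|
    continuousOn_const.mul <| (hf.comp continuousOn_fst fun p hp => hp.1).mul <|
      (((continuous_ofReal.comp continuous_fst).sub continuous_snd).pow _).continuousOn.inv₀
        fun p hp => pow_ne_zero _ (ofReal_sub_ne_zero_of_notMem_unitSegment (hball hp.2) hp.1)
  have key := hasDerivAt_integral_of_dominated_loc_of_deriv_le (μ := volume) (a := 0) (b := 1)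
    (F := fun w x => f x * (((x : ℂ) - w) ^ (k + 1))⁻¹)
    (F' := fun w x => ((k : ℂ) + 1) * (f x * (((x : ℂ) - w) ^ (k + 2))⁻¹))
    (bound := fun _ => C) (Metric.ball_mem_nhds z hε) ?_
    (intervalIntegrable_poleIntegrand hf hz k) ?_ ?_ intervalIntegrable_const ?_
  · rw [poleIntegral, ← intervalIntegral.integral_const_mul]
    exact key.2
  · filter_upwards [isOpen_compl_unitSegment.mem_nhds hz] with w hw
    exact ((continuousOn_poleIntegrand hf hw k).mono hIoc).aestronglyMeasurable
      measurableSet_uIoc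
  · exact ((continuousOn_const.mul (continuousOn_poleIntegrand hf hz (k + 1))).mono
      hIoc).aestronglyMeasurable measurableSet_uIoc
  · exact ae_of_all _ fun x hx w hw => hC (x, w) ⟨hIoc hx, Metric.ball_subset_closedBall hw⟩
  · refine ae_of_all _ fun x hx w hw => ?_
    exact ((hasDerivAt_inv_sub_pow (ofReal_sub_ne_zero_of_notMem_unitSegment
      (hball (Metric.ball_subset_closedBall hw)) (hIoc hx)) k).const_mul (f x)).congr_deriv
      (mul_left_comm _ _ _)

theorem iteratedDeriv_poleIntegral_zero (hf : ContinuousOn f (Set.Icc 0 1)) {z : ℂ}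
    (hz : z ∉ unitSegment) (k : ℕ) :
    iteratedDeriv k (poleIntegral f 0) z = k ! * poleIntegral f k z := by
  induction k generalizing z with
  | zero => simp
  | succ k ih =>
    have hev : iteratedDeriv k (poleIntegral f 0) =ᶠ[𝓝 z] fun w => k ! * poleIntegral f k w :=
      eventually_of_mem (isOpen_compl_unitSegment.mem_nhds hz) fun _ hw => ih hw
    rw [iteratedDeriv_succ, hev.deriv_eq, ((hasDerivAt_poleIntegral hf hz k).const_mul _).deriv,
      Nat.factorial_succ]
    push_cast
    ring

theorem taylorCoeff_poleIntegral_zero (hf : ContinuousOn f (Set.Icc 0 1)) {z : ℂ}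
    (hz : z ∉ unitSegment) (k : ℕ) :
    taylorCoeff (poleIntegral f 0) z k = poleIntegral f k z := by
  rw [taylorCoeff, iteratedDeriv_poleIntegral_zero hf hz,
    inv_mul_cancel_left₀ (Nat.cast_ne_zero.2 k.factorial_ne_zero)]

theorem contDiffAt_poleIntegral (hf : ContinuousOn f (Set.Icc 0 1)) {z : ℂ}
    (hz : z ∉ unitSegment) (k : ℕ) {n : WithTop ℕ∞} :
    ContDiffAt ℂ n (poleIntegral f k) z :=
  (DifferentiableOn.contDiffOn (fun _ hw => (hasDerivAt_poleIntegral hf hw k).differentiableAt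
    |>.differentiableWithinAt) isOpen_compl_unitSegment).contDiffAt
    (isOpen_compl_unitSegment.mem_nhds hz)

end PoleIntegral

theorem sub_ne_zero_of_one_sub_div_mem_slitPlane {z w : ℂ} (hw : 1 - w / z ∈ slitPlane)
    (hz : z ≠ 0) : w - z ≠ 0 := by
  rintro h
  apply slitPlane_ne_zero hw
  rw [sub_eq_zero.1 h, div_self hz, sub_self]

theorem hasDerivAt_log_one_sub_div {z w : ℂ} (hw : 1 - w / z ∈ slitPlane) (hz : z ≠ 0) :
    HasDerivAt (fun w => log (1 - w / z)) ((w - z)⁻¹) w := by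
  refine ((hasDerivAt_log hw).comp w
    (((hasDerivAt_id' w).div_const z).const_sub 1)).congr_deriv ?_
  have hwz := sub_ne_zero_of_one_sub_div_mem_slitPlane hw hz
  have hzw : z - w ≠ 0 := by rw [← neg_sub]; exact neg_ne_zero.2 hwz
  field_simp
  ring

theorem hasDerivAt_sum_pow_succ_div (m : ℕ) (z w : ℂ) :
    HasDerivAt (fun w => ∑ k ∈ range m, z ^ (m - 1 - k) * w ^ (k + 1) / (k + 1))
      (∑ k ∈ range m, w ^ k * z ^ (m - 1 - k)) w := by
  refine HasDerivAt.fun_sum fun k _ => ?_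
  refine (((hasDerivAt_pow (k + 1) w).const_mul _).div_const ((k : ℂ) + 1)).congr_deriv ?_
  have : (k : ℂ) + 1 ≠ 0 := Nat.cast_add_one_ne_zero k
  field_simp
  push_cast
  ring

-- `w ^ m / (w - z) = ∑_{k<m} w ^ k z ^ (m-1-k) + z ^ m / (w - z)`, integrated term by term.
theorem hasDerivAt_primitive_pow_div_sub (m : ℕ) {z w : ℂ} (hw : 1 - w / z ∈ slitPlane)
    (hz : z ≠ 0) :
    HasDerivAt (fun w => ∑ k ∈ range m, z ^ (m - 1 - k) * w ^ (k + 1) / (k + 1) +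
      z ^ m * log (1 - w / z)) (w ^ m * (w - z)⁻¹) w := by
  refine ((hasDerivAt_sum_pow_succ_div m z w).add
    ((hasDerivAt_log_one_sub_div hw hz).const_mul (z ^ m))).congr_deriv ?_
  have hwz := sub_ne_zero_of_one_sub_div_mem_slitPlane hw hz
  field_simp
  linear_combination geom_sum₂_mul w z m

theorem poleIntegral_pow_zero (m : ℕ) {z : ℂ} (hz : z ∉ unitSegment) :
    poleIntegral (fun x => (x : ℂ) ^ m) 0 z = g m z := by
  have hz0 : z ≠ 0 := fun h => hz ⟨0, Set.left_mem_Icc.2 zero_le_one, by simp [h]⟩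
  have hF : ∀ x ∈ Set.uIcc (0 : ℝ) 1, HasDerivAt (fun x : ℝ =>
      ∑ k ∈ range m, z ^ (m - 1 - k) * (x : ℂ) ^ (k + 1) / (k + 1) + z ^ m * log (1 - x / z))
      ((x : ℂ) ^ m * (((x : ℂ) - z) ^ (0 + 1))⁻¹) x := fun x hx => by
    rw [Set.uIcc_of_le zero_le_one] at hx
    simpa using (hasDerivAt_primitive_pow_div_sub m (one_sub_div_mem_slitPlane hz hx)
      hz0).comp_ofReal
  rw [poleIntegral, integral_eq_sub_of_hasDerivAt hF
    (intervalIntegrable_poleIntegrand (continuous_ofReal.fun_pow m).continuousOn hz 0)]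
  simp only [g, ofReal_one, ofReal_zero, one_pow, mul_one, zero_div, sub_zero, log_one,
    mul_zero, add_zero, ne_eq, Nat.add_one_ne_zero, not_false_eq_true, zero_pow, sum_const_zero]
  rw [← Finset.Ico_add_one_right_eq_Icc, sum_Ico_eq_sum_range, Nat.add_sub_cancel, mul_add,
    mul_sum, add_comm]
  congr 1
  refine sum_congr rfl fun k hk => ?_
  have hpow : z ^ m = z ^ (m - 1 - k) * z ^ (k + 1) := by
    rw [← pow_add]; congr 1; have := mem_range.1 hk; omega
  rw [hpow]
  push_cast
  field_simp
  ring

theorem poleIntegral_pow_eventuallyEq_g (m : ℕ) {z : ℂ} (hz : z ∉ unitSegment) :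
    poleIntegral (fun x => (x : ℂ) ^ m) 0 =ᶠ[𝓝 z] g m :=
  eventually_of_mem (isOpen_compl_unitSegment.mem_nhds hz) fun _ hw =>
    poleIntegral_pow_zero m hw

theorem contDiffAt_g (m : ℕ) {z : ℂ} (hz : z ∉ unitSegment) {n : WithTop ℕ∞} :
    ContDiffAt ℂ n (g m) z :=
  (contDiffAt_poleIntegral (continuous_ofReal.fun_pow m).continuousOn hz 0).congr_of_eventuallyEq
    (poleIntegral_pow_eventuallyEq_g m hz).symm

theorem taylorCoeff_g (m : ℕ) {z : ℂ} (hz : z ∉ unitSegment) (k : ℕ) :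
    taylorCoeff (g m) z k = poleIntegral (fun x => (x : ℂ) ^ m) k z := by
  rw [← (poleIntegral_pow_eventuallyEq_g m hz).taylorCoeff_eq,
    taylorCoeff_poleIntegral_zero (continuous_ofReal.fun_pow m).continuousOn hz]

theorem taylorCoeff_g_mul (m : ℕ) {P : ℂ → ℂ} {z : ℂ} (hz : z ∉ unitSegment) {n : ℕ}
    (hP : ContDiffAt ℂ n P z) :
    taylorCoeff (fun w => g m w * P w) z n = ∑ kl ∈ antidiagonal n,
      taylorCoeff P z kl.2 * poleIntegral (fun x => (x : ℂ) ^ m) kl.1 z := by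
  rw [taylorCoeff_mul (contDiffAt_g m hz) hP]
  exact sum_congr rfl fun kl _ => by rw [taylorCoeff_g m hz, mul_comm]

theorem integral_rational_eq_sum_residues_higher_poles
    (n : ℕ) (hn : 1 ≤ n) (ω : Fin n → ℂ)
    (hdist : Function.Injective ω)
    (hseg : ∀ i, ∀ x : ℝ, x ∈ Set.Icc (0 : ℝ) 1 → ω i ≠ (x : ℂ))
    (N : Fin n → ℕ) (hN : ∀ i, 1 ≤ N i) (m : ℕ) :
    (∫ x in (0:ℝ)..1, (x : ℂ) ^ m / ∏ i, ((x : ℂ) - ω i) ^ (N i)) =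
      ∑ i, (1 / (Nat.factorial (N i - 1) : ℂ)) *
        iteratedDeriv (N i - 1)
          (fun z => g m z * ∏ j ∈ Finset.univ.erase i, ((z - ω j) ^ (N j))⁻¹) (ω i) := by
  have : Nonempty (Fin n) := ⟨⟨0, hn⟩⟩
  have hω : ∀ i, ω i ∉ unitSegment := fun i ⟨x, hx, hxω⟩ => hseg i x hx hxω.symm
  set P := fun i z => ∏ j ∈ univ.erase i, ((z - ω j) ^ N j)⁻¹
  calc (∫ x in (0:ℝ)..1, (x : ℂ) ^ m / ∏ i, ((x : ℂ) - ω i) ^ (N i))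
      = ∫ x in (0:ℝ)..1, ∑ p ∈ univ.sigma fun i => antidiagonal (N i - 1),
          taylorCoeff (P p.1) (ω p.1) p.2.2 *
            ((x : ℂ) ^ m * (((x : ℂ) - ω p.1) ^ (p.2.1 + 1))⁻¹) := by
        refine integral_congr fun x hx => ?_
        rw [Set.uIcc_of_le zero_le_one] at hx
        rw [sum_sigma, div_eq_mul_inv,
          inv_prod_sub_pow_eq_sum hdist hN fun i h => hseg i x hx h.symm]
        simp only [mul_sum, mul_left_comm]
        rfl
    _ = ∑ p ∈ univ.sigma fun i => antidiagonal (N i - 1),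
          taylorCoeff (P p.1) (ω p.1) p.2.2 * poleIntegral (fun x => (x : ℂ) ^ m) p.2.1 (ω p.1) :=
        integral_sum_mul_poleIntegrand (continuous_ofReal.fun_pow m).continuousOn
          fun p _ => hω p.1
    _ = _ := by
        rw [sum_sigma]
        refine sum_congr rfl fun i _ => ?_
        rw [one_div, ← taylorCoeff, taylorCoeff_g_mul m (hω i) (contDiffAt_prod_inv_sub_pow
          fun j hj h => ne_of_mem_erase hj (hdist h).symm)]
end

section
/- For every complex number ω not lying on the real segment [0,1] ⊆ ℂ and every natural number m, ∫_0^1 x^m/(x − ω) dx = g_m(ω). In particular, for m = 0, ∫_0^1 1/(x − ω) dx = Log(1 − 1/ω). -/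
open Complex Finset

section aux

variable {ω : ℂ}

lemma omega_ne_zero (hω : ∀ x : ℝ, x ∈ Set.Icc (0 : ℝ) 1 → ω ≠ (x : ℂ)) : ω ≠ 0 := by
  have := hω 0 (by norm_num)
  simpa using this

lemma sub_omega_ne_zero (hω : ∀ x : ℝ, x ∈ Set.Icc (0 : ℝ) 1 → ω ≠ (x : ℂ))
    {x : ℝ} (hx : x ∈ Set.Icc (0:ℝ) 1) : (x : ℂ) - ω ≠ 0 := by
  have := hω x hx
  intro h
  exact this (by linear_combination -h)

lemma mem_slit (hω : ∀ x : ℝ, x ∈ Set.Icc (0 : ℝ) 1 → ω ≠ (x : ℂ))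
    {x : ℝ} (hx : x ∈ Set.Icc (0:ℝ) 1) :
    1 - (x : ℂ) / ω ∈ Complex.slitPlane := by
  have hω0 : ω ≠ 0 := omega_ne_zero hω
  rw [Complex.mem_slitPlane_iff]
  by_cases hb : ω.im = 0
  · left
    have hωeq : ω = (ω.re : ℂ) := by apply Complex.ext <;> simp [hb]
    have hre : (1 - (x:ℂ)/ω).re = 1 - x / ω.re := by
      rw [hωeq, ← Complex.ofReal_div]
      simp
    rw [hre]
    have ha : ω.re < 0 ∨ 1 < ω.re := by
      by_contra h
      push_neg at h
      exact hω ω.re ⟨h.1, h.2⟩ hωeq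
    rcases ha with ha | ha
    · have : x / ω.re ≤ 0 := div_nonpos_of_nonneg_of_nonpos hx.1 ha.le
      linarith
    · have : x / ω.re < 1 := (div_lt_one (by linarith)).2 (by linarith [hx.2])
      linarith
  · by_cases hx0 : x = 0
    · left; simp [hx0]
    · right
      have him : (1 - (x:ℂ)/ω).im = x * ω.im / Complex.normSq ω := by
        simp [Complex.div_im, Complex.sub_im, Complex.ofReal_im, Complex.ofReal_re]
      rw [him]
      exact div_ne_zero (mul_ne_zero (fun h => hx0 h) hb)
        (ne_of_gt (Complex.normSq_pos.2 hω0))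

lemma intInt (hω : ∀ x : ℝ, x ∈ Set.Icc (0 : ℝ) 1 → ω ≠ (x : ℂ)) (m : ℕ) :
    IntervalIntegrable (fun x : ℝ => (x : ℂ) ^ m / ((x : ℂ) - ω))
      MeasureTheory.volume 0 1 := by
  apply ContinuousOn.intervalIntegrable
  rw [Set.uIcc_of_le zero_le_one]
  exact ((Complex.continuous_ofReal.pow m).continuousOn.div
    ((Complex.continuous_ofReal.sub continuous_const).continuousOn)
    (fun x hx => sub_omega_ne_zero hω hx))

lemma base (hω : ∀ x : ℝ, x ∈ Set.Icc (0 : ℝ) 1 → ω ≠ (x : ℂ)) :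
    (∫ x in (0:ℝ)..1, 1 / ((x : ℂ) - ω)) = Complex.log (1 - 1 / ω) := by
  have hω0 : ω ≠ 0 := omega_ne_zero hω
  have key : ∀ x ∈ Set.uIcc (0:ℝ) 1,
      HasDerivAt (fun t : ℝ => Complex.log (1 - (t : ℂ) / ω)) (1 / ((x:ℂ) - ω)) x := by
    intro x hx
    rw [Set.uIcc_of_le zero_le_one] at hx
    have h1 : HasDerivAt (fun z : ℂ => 1 - z / ω) (-(1/ω)) (x : ℂ) := by
      simpa using ((hasDerivAt_id (x:ℂ)).div_const ω).const_sub 1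
    have h2 : HasDerivAt (fun z : ℂ => Complex.log (1 - z / ω))
        (-(1/ω) / (1 - (x:ℂ)/ω)) (x : ℂ) := h1.clog (mem_slit hω hx)
    have h3 := h2.comp_ofReal
    convert h3 using 1
    have hxω : ω - (x : ℂ) ≠ 0 := fun h => sub_omega_ne_zero hω hx (by linear_combination -h)
    have h4 : -ω + (x : ℂ) ≠ 0 := fun h => hxω (by linear_combination -h)
    field_simp [h4]
    rw [show ω - (x:ℂ) = -((x:ℂ) - ω) by ring, neg_div,
      div_self (sub_omega_ne_zero hω hx)]
  have := intervalIntegral.integral_eq_sub_of_hasDerivAt key ?_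
  · rw [this]; simp
  · simpa using intInt hω 0

lemma main (hω : ∀ x : ℝ, x ∈ Set.Icc (0 : ℝ) 1 → ω ≠ (x : ℂ)) (m : ℕ) :
    (∫ x in (0:ℝ)..1, (x : ℂ) ^ m / ((x : ℂ) - ω)) = g m ω := by
  have hω0 : ω ≠ 0 := omega_ne_zero hω
  induction m with
  | zero =>
    simp only [pow_zero, g, Finset.Icc_self]
    rw [base hω]
    simp
  | succ m ih =>
    have hsplit : ∀ x ∈ Set.uIcc (0:ℝ) 1,
        (x : ℂ) ^ (m+1) / ((x : ℂ) - ω)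
          = (x : ℂ) ^ m + ω * ((x : ℂ) ^ m / ((x : ℂ) - ω)) := by
      intro x hx
      rw [Set.uIcc_of_le zero_le_one] at hx
      have hxω : (x : ℂ) - ω ≠ 0 := sub_omega_ne_zero hω hx
      field_simp
      ring
    rw [intervalIntegral.integral_congr hsplit]
    rw [intervalIntegral.integral_add]
    · rw [intervalIntegral.integral_const_mul, ih]
      have hpow : (∫ x in (0:ℝ)..1, (x : ℂ) ^ m) = 1 / ((m : ℂ) + 1) := by
        have hc : (fun x : ℝ => (x : ℂ) ^ m) = fun x : ℝ => ((x ^ m : ℝ) : ℂ) := by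
          push_cast; rfl
        rw [hc, intervalIntegral.integral_ofReal, integral_pow]
        push_cast
        simp
      rw [hpow]
      simp only [g, Finset.sum_Icc_succ_top (Nat.le_add_left 1 m)]
      push_cast
      have hpω : ω ^ (m+1) ≠ 0 := pow_ne_zero _ hω0
      have hm1 : ((m : ℂ) + 1) ≠ 0 := Nat.cast_add_one_ne_zero m
      field_simp
      ring
    · apply ContinuousOn.intervalIntegrable
      exact (Complex.continuous_ofReal.pow m).continuousOn
    · exact (intInt hω m).const_mul ω

end aux

theorem integral_single_pole_eq_g
    (ω : ℂ) (hω : ∀ x : ℝ, x ∈ Set.Icc (0 : ℝ) 1 → ω ≠ (x : ℂ)) (m : ℕ) :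
    (∫ x in (0:ℝ)..1, (x : ℂ) ^ m / ((x : ℂ) - ω)) = g m ω ∧
    (∫ x in (0:ℝ)..1, 1 / ((x : ℂ) - ω)) = Complex.log (1 - 1 / ω) := by
  exact ⟨main hω m, base hω⟩
end

section
/- Let h : ℂ → ℂ be a polynomial function of degree at least 1 and let m be a natural number. Then the circle integral ∮_{|ω| = R} g_m(ω)/h(ω) dω tends to 0 as R → ∞. -/
/-!
Since `Log (1 - w) = -∑_{k ≥ 1} w^k / k` for `|w| < 1`, the bracket in `g m ω` is minus the tail
`∑_{k > m} ω^{-k} / k`, of size `O(|ω|^{-m-1})`; hence `g m ω = O(1/ω)` at infinity. As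
`1 / h(ω) → 0`, the integrand is `o(1/|ω|)`, and the standard estimate
`|∮| ≤ 2πR · max_{|ω| = R} |integrand|` makes the integral `o(1)`.
-/

open Complex Finset Filter

open Asymptotics Bornology Metric Polynomial Topology

lemma Complex.logTaylor_neg (n : ℕ) (w : ℂ) :
    logTaylor n (-w) = -∑ k ∈ range n, w ^ k / k := by
  simp only [logTaylor, ← sum_neg_distrib]
  refine sum_congr rfl fun k _ => ?_
  rw [neg_pow w, ← mul_assoc, ← pow_add, Odd.neg_one_pow ⟨k, by ring⟩, neg_one_mul, neg_div]

lemma g_eq_mul_log_sub_logTaylor (m : ℕ) (z : ℂ) :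
    g m z = z ^ m * (log (1 + -z⁻¹) - logTaylor (m + 1) (-z⁻¹)) := by
  -- the `k = 0` term of `logTaylor` is `z⁻¹ ^ 0 / 0 = 0`
  rw [g, logTaylor_neg, Nat.range_succ_eq_Icc_zero, ← insert_Icc_add_one_left_eq_Icc m.zero_le,
    sum_insert (by simp)]
  simp [sub_eq_add_neg, div_eq_mul_inv, mul_comm]

lemma norm_g_le (m : ℕ) {z : ℂ} (hz : 2 ≤ ‖z‖) : ‖g m z‖ ≤ 2 * ‖z⁻¹‖ := by
  have hw : ‖-z⁻¹‖ ≤ 1 / 2 := by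
    rw [norm_neg, norm_inv, one_div]; exact inv_anti₀ two_pos hz
  have htail := norm_log_sub_logTaylor_le m (hw.trans_lt one_half_lt_one)
  have h2 : (1 - ‖-z⁻¹‖)⁻¹ ≤ 2 := by
    rw [inv_le_comm₀ (by linarith) two_pos]; linarith
  rw [g_eq_mul_log_sub_logTaylor, norm_mul, norm_pow]
  calc ‖z‖ ^ m * ‖log (1 + -z⁻¹) - logTaylor (m + 1) (-z⁻¹)‖
      ≤ ‖z‖ ^ m * (‖z⁻¹‖ ^ (m + 1) * 2 / 1) := by
        rw [← norm_neg z⁻¹]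
        refine mul_le_mul_of_nonneg_left (htail.trans ?_) (by positivity)
        gcongr
        linarith
    _ = 2 * ‖z⁻¹‖ := by
        have : ‖z‖ ≠ 0 := by linarith
        rw [norm_inv, inv_pow, pow_succ]
        field_simp

lemma isBigO_g_inv (m : ℕ) : g m =O[cobounded ℂ] (·⁻¹) :=
  .of_bound 2 <| (eventually_cobounded_le_norm 2).mono fun _ hz => norm_g_le m hz

lemma Polynomial.tendsto_inv_eval_cobounded {𝕜 : Type*} [NormedField 𝕜] (p : 𝕜[X])
    (hp : 0 < p.degree) : Tendsto (fun z => (p.eval z)⁻¹) (cobounded 𝕜) (𝓝 0) :=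
  tendsto_inv₀_cobounded.comp <| tendsto_norm_atTop_iff_cobounded.mp <|
    p.tendsto_norm_atTop hp tendsto_norm_cobounded_atTop

lemma circleIntegral_tendsto_zero_of_isLittleO {E : Type*} [NormedAddCommGroup E]
    [NormedSpace ℂ E] {f : ℂ → E} {c : ℂ} (hf : f =o[cobounded ℂ] fun z => (z - c)⁻¹) :
    Tendsto (fun R : ℝ => ∮ z in C(c, R), f z) atTop (𝓝 0) := by
  refine (isLittleO_one_iff ℝ).mp <| isLittleO_iff.mpr fun ε hε => ?_
  obtain ⟨r, -, hr⟩ := (hasBasis_cobounded_compl_closedBall c).eventually_iff.mp <|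
    hf.def (c := ε / (2 * Real.pi)) (by positivity)
  filter_upwards [eventually_gt_atTop (max r 0)] with R hR
  have hR0 : 0 < R := (le_max_right r 0).trans_lt hR
  have hbound : ∀ z ∈ sphere c R, ‖f z‖ ≤ ε / (2 * Real.pi) * R⁻¹ := by
    intro z hz
    rw [mem_sphere_iff_norm] at hz
    simpa [hz] using @hr z (by simpa [dist_eq_norm, hz] using (le_max_left r 0).trans_lt hR)
  calc ‖∮ z in C(c, R), f z‖ ≤ 2 * Real.pi * R * (ε / (2 * Real.pi) * R⁻¹) :=
        circleIntegral.norm_integral_le_of_norm_le_const hR0.le hbound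
    _ = ε * ‖(1 : ℝ)‖ := by rw [norm_one]; field_simp

theorem circleIntegral_g_div_poly_tendsto_zero
    (p : Polynomial ℂ) (hp : 1 ≤ p.natDegree) (m : ℕ) :
    Filter.Tendsto (fun R : ℝ => ∮ z in C(0, R), g m z / p.eval z)
      Filter.atTop (nhds 0) := by
  have hdeg : 0 < p.degree := natDegree_pos_iff_degree_pos.mp hp
  have hinv := (isLittleO_one_iff ℂ).mpr (p.tendsto_inv_eval_cobounded hdeg)
  refine circleIntegral_tendsto_zero_of_isLittleO ?_
  simpa [div_eq_mul_inv] using (isBigO_g_inv m).mul_isLittleO hinv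
end

section
/- Let ω be a complex number with Im(ω) ≠ 0 and let H be a nonzero complex number. Define E_k = Im( g_k(ω) / H ) / Im(ω) for each natural number k. Then for every natural number m, E_{m+1} = Re(ω)·E_m + Re( g_m(ω)/H ) + (1/(m+1)) · Im( 1/H ) / Im(ω). -/
open Complex Finset

lemma g_succ {ω : ℂ} (hω : ω ≠ 0) (m : ℕ) :
    g (m + 1) ω = ω * g m ω + 1 / ((m : ℂ) + 1) := by
  have hm : (m : ℂ) + 1 ≠ 0 := Nat.cast_add_one_ne_zero m
  unfold g
  rw [sum_Icc_succ_top (Nat.le_add_left 1 m)]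
  push_cast
  field_simp
  ring

lemma Complex.im_mul_add_ofReal_div_div_im {ω : ℂ} (hω : ω.im ≠ 0) (z H : ℂ) (r : ℝ) :
    ((ω * z + r) / H).im / ω.im =
      ω.re * ((z / H).im / ω.im) + (z / H).re + r * (1 / H).im / ω.im := by
  have hsplit : (ω * z + r) / H = ω * (z / H) + r * (1 / H) := by
    rw [add_div, mul_div_assoc, mul_one_div]
  rw [hsplit, add_im, mul_im, im_ofReal_mul]
  field_simp

theorem E_recurrence_general (ω H : ℂ) (hω : ω.im ≠ 0) (m : ℕ) :
    (g (m + 1) ω / H).im / ω.im =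
      ω.re * ((g m ω / H).im / ω.im) + (g m ω / H).re +
        (1 / ((m : ℝ) + 1)) * (1 / H).im / ω.im := by
  have hω0 : ω ≠ 0 := fun h => hω (by simp [h])
  have hcoeff : (1 : ℂ) / ((m : ℂ) + 1) = ((1 / ((m : ℝ) + 1) : ℝ) : ℂ) := by push_cast; rfl
  rw [g_succ hω0, hcoeff]
  exact im_mul_add_ofReal_div_div_im hω _ _ _

theorem E_recurrence (ω H : ℂ) (hω : ω.im ≠ 0) (hH : H ≠ 0) (m : ℕ) :
    (g (m + 1) ω / H).im / ω.im =
      ω.re * ((g m ω / H).im / ω.im) + (g m ω / H).re +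
        (1 / ((m : ℝ) + 1)) * (1 / H).im / ω.im :=
  E_recurrence_general ω H hω m
end
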